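/- Let θ₀ ∈ (0,1), ρₙ = Beta(nθ₀, n(1−θ₀)), and π = Beta(α,β) for fixed α,β > 0. Then there exists C > 0 such that KL(ρₙ, π) < C + (1/2)·log n for all sufficiently large n. -/

import Mathlib

/-!
`KL(ρₙ, π) = ∫ ρₙ log ρₙ - ∫ ρₙ log π ≤ log (sup ρₙ) + E_{ρₙ}[-log π]`.

The second term is bounded: `-log π(θ) ≤ |log B(α, β)| + |α - 1| θ⁻¹ + |β - 1| (1 - θ)⁻¹`, and the
inverse moments of `ρₙ` are `E[θ⁻¹] = (n - 1) / (nθ₀ - 1) ≤ 2 / θ₀` and symmetrically for `1 - θ`.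

For the first term, the concave log-kernel `(a - 1) log θ + (b - 1) log (1 - θ)` of `ρₙ` lies below
its tangent line at `θ₀`, whose slope `1 / (1 - θ₀) - 1 / θ₀` does not depend on `n`, and it drops
by `O(1)` at most on the window `(θ₀, θ₀ + n^{-1/2})`. Hence `ρₙ ≥ e^{-K} sup ρₙ` on a set of
measure `n^{-1/2}`, and `∫ ρₙ = 1` forces `sup ρₙ ≤ e^K √n`.
-/

open MeasureTheory

noncomputable def betaPDF (a b θ : ℝ) : ℝ :=
  θ ^ (a - 1) * (1 - θ) ^ (b - 1) * (Real.Gamma (a + b) / (Real.Gamma a * Real.Gamma b))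

open Real Set

noncomputable def betaLogKernel (a b θ : ℝ) : ℝ :=
  (a - 1) * log θ + (b - 1) * log (1 - θ)

lemma log_sub_log_le_div_sub_one {x y : ℝ} (hx : 0 < x) (hy : 0 < y) :
    log x - log y ≤ x / y - 1 :=
  log_div hx.ne' hy.ne' ▸ log_le_sub_one_of_pos (div_pos hx hy)

lemma one_sub_div_le_log_sub_log {x y : ℝ} (hx : 0 < x) (hy : 0 < y) :
    1 - y / x ≤ log x - log y := by
  have h := log_sub_log_le_div_sub_one hy hx
  linarith

lemma neg_mul_log_le_abs_mul_inv (c : ℝ) {x : ℝ} (hx : x ∈ Ioo 0 1) :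
    -(c * log x) ≤ |c| * x⁻¹ := by
  have hlog : |log x| ≤ x⁻¹ := by
    rw [abs_of_nonpos (log_nonpos hx.1.le hx.2.le)]
    linarith [neg_inv_le_log hx.1.le]
  calc -(c * log x) ≤ |c * log x| := neg_le_abs _
    _ = |c| * |log x| := abs_mul _ _
    _ ≤ |c| * x⁻¹ := mul_le_mul_of_nonneg_left hlog (abs_nonneg c)

lemma sub_one_div_mul_sub_one_le {n p : ℝ} (hp : 0 < p) (h : 2 ≤ n * p) :
    (n - 1) / (n * p - 1) ≤ 2 / p := by
  rw [div_le_div_iff₀ (by linarith) hp]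
  nlinarith

section BetaDensity

variable {a b θ : ℝ}

lemma betaPDF_eq_betaPDFReal (hθ : θ ∈ Ioo 0 1) :
    betaPDF a b θ = ProbabilityTheory.betaPDFReal a b θ := by
  rw [ProbabilityTheory.betaPDFReal, if_pos (by exact hθ), ProbabilityTheory.beta, betaPDF,
    one_div_div]
  ring

lemma betaPDF_pos (ha : 0 < a) (hb : 0 < b) (hθ : θ ∈ Ioo 0 1) : 0 < betaPDF a b θ :=
  betaPDF_eq_betaPDFReal hθ ▸ ProbabilityTheory.betaPDFReal_pos hθ.1 hθ.2 ha hb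

lemma log_betaPDF (ha : 0 < a) (hb : 0 < b) (hθ : θ ∈ Ioo 0 1) :
    log (betaPDF a b θ) = betaLogKernel a b θ - log (ProbabilityTheory.beta a b) := by
  have h1θ : 0 < 1 - θ := sub_pos.2 hθ.2
  have hB := ProbabilityTheory.beta_pos ha hb
  rw [ProbabilityTheory.beta] at hB ⊢
  have hpos := rpow_pos_of_pos hθ.1 (a - 1)
  have hpos' := rpow_pos_of_pos h1θ (b - 1)
  rw [betaPDF, ← inv_div, log_mul (mul_pos hpos hpos').ne' (inv_pos.2 hB).ne',
    log_mul hpos.ne' hpos'.ne',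
    log_rpow hθ.1, log_rpow h1θ, log_inv, betaLogKernel]
  ring

lemma betaPDFReal_nonneg (ha : 0 < a) (hb : 0 < b) : 0 ≤ ProbabilityTheory.betaPDFReal a b :=
  fun x ↦ by
    by_cases hx : x ∈ Ioo 0 1
    · exact (ProbabilityTheory.betaPDFReal_pos hx.1 hx.2 ha hb).le
    · rw [Pi.zero_apply, ProbabilityTheory.betaPDFReal, if_neg (by exact hx)]

lemma integrable_betaPDFReal (ha : 0 < a) (hb : 0 < b) :
    Integrable (ProbabilityTheory.betaPDFReal a b) := by
  refine ⟨(ProbabilityTheory.measurable_betaPDFReal a b).aestronglyMeasurable,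
    (hasFiniteIntegral_iff_ofReal (.of_forall (betaPDFReal_nonneg ha hb))).2 ?_⟩
  exact lt_of_eq_of_lt (ProbabilityTheory.lintegral_betaPDF_eq_one ha hb) ENNReal.one_lt_top

lemma integrableOn_betaPDF (ha : 0 < a) (hb : 0 < b) : IntegrableOn (betaPDF a b) (Ioo 0 1) :=
  (integrable_betaPDFReal ha hb).integrableOn.congr_fun
    (fun _ hθ ↦ (betaPDF_eq_betaPDFReal hθ).symm) measurableSet_Ioo

lemma integral_betaPDF (ha : 0 < a) (hb : 0 < b) : ∫ θ in Ioo 0 1, betaPDF a b θ = 1 := by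
  rw [setIntegral_congr_fun measurableSet_Ioo fun _ hθ ↦ betaPDF_eq_betaPDFReal hθ,
    setIntegral_eq_integral_of_forall_compl_eq_zero fun x hx ↦ by
      rw [ProbabilityTheory.betaPDFReal, if_neg (by exact hx)],
    integral_eq_lintegral_of_nonneg_ae (.of_forall (betaPDFReal_nonneg ha hb))
      (ProbabilityTheory.measurable_betaPDFReal a b).aestronglyMeasurable]
  exact ENNReal.toReal_eq_one_iff _ |>.2 (ProbabilityTheory.lintegral_betaPDF_eq_one ha hb)

lemma betaPDF_one_sub : betaPDF b a (1 - θ) = betaPDF a b θ := by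
  rw [betaPDF, betaPDF, sub_sub_cancel, add_comm b, mul_comm (Real.Gamma b)]
  ring

lemma betaPDF_mul_inv (ha : 1 < a) (hb : 0 < b) (hθ : 0 < θ) :
    betaPDF a b θ * θ⁻¹ = (a + b - 1) / (a - 1) * betaPDF (a - 1) b θ := by
  have ha' : a - 1 ≠ 0 := sub_ne_zero.2 ha.ne'
  have hab : a - 1 + b ≠ 0 := by linarith
  have hΓa := Real.Gamma_add_one ha'
  have hΓab := Real.Gamma_add_one hab
  rw [sub_add_cancel] at hΓa
  rw [show a - 1 + b + 1 = a + b by ring] at hΓab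
  have hΓ₁ := Real.Gamma_pos_of_pos (sub_pos.2 ha)
  have hΓ₂ := Real.Gamma_pos_of_pos hb
  rw [betaPDF, betaPDF, hΓa, hΓab, rpow_sub_one hθ.ne' (a - 1)]
  field_simp
  ring

lemma betaPDF_mul_one_sub_inv (ha : 0 < a) (hb : 1 < b) (hθ : θ < 1) :
    betaPDF a b θ * (1 - θ)⁻¹ = (a + b - 1) / (b - 1) * betaPDF a (b - 1) θ := by
  rw [← betaPDF_one_sub, betaPDF_mul_inv hb ha (sub_pos.2 hθ), betaPDF_one_sub, add_comm b]

lemma mul_volume_le_one_of_le_betaPDF (ha : 0 < a) (hb : 0 < b) {s : Set ℝ} {m : ℝ}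
    (hs : s ⊆ Ioo 0 1) (hsm : MeasurableSet s) (hm : ∀ x ∈ s, m ≤ betaPDF a b x) :
    m * volume.real s ≤ 1 := by
  have hfin : volume s ≠ ⊤ := (measure_mono hs).trans_lt measure_Ioo_lt_top |>.ne
  calc m * volume.real s = ∫ _ in s, m := by rw [setIntegral_const, smul_eq_mul, mul_comm]
    _ ≤ ∫ x in s, betaPDF a b x :=
        setIntegral_mono_on (integrableOn_const hfin) ((integrableOn_betaPDF ha hb).mono_set hs)
          hsm hm
    _ ≤ ∫ x in Ioo 0 1, betaPDF a b x :=
        setIntegral_mono_set (integrableOn_betaPDF ha hb)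
          (ae_restrict_of_forall_mem measurableSet_Ioo fun _ hx ↦ (betaPDF_pos ha hb hx).le)
          hs.eventuallyLE
    _ = 1 := integral_betaPDF ha hb

lemma integrableOn_betaPDF_mul_inv (ha : 1 < a) (hb : 0 < b) :
    IntegrableOn (fun θ ↦ betaPDF a b θ * θ⁻¹) (Ioo 0 1) :=
  IntegrableOn.congr_fun ((integrableOn_betaPDF (sub_pos.2 ha) hb).const_mul _)
    (fun _ hθ ↦ (betaPDF_mul_inv ha hb hθ.1).symm) measurableSet_Ioo

lemma integral_betaPDF_mul_inv (ha : 1 < a) (hb : 0 < b) :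
    ∫ θ in Ioo 0 1, betaPDF a b θ * θ⁻¹ = (a + b - 1) / (a - 1) := by
  rw [setIntegral_congr_fun measurableSet_Ioo fun _ hθ ↦ betaPDF_mul_inv ha hb hθ.1,
    integral_const_mul, integral_betaPDF (sub_pos.2 ha) hb, mul_one]

lemma integrableOn_betaPDF_mul_one_sub_inv (ha : 0 < a) (hb : 1 < b) :
    IntegrableOn (fun θ ↦ betaPDF a b θ * (1 - θ)⁻¹) (Ioo 0 1) :=
  IntegrableOn.congr_fun ((integrableOn_betaPDF ha (sub_pos.2 hb)).const_mul _)
    (fun _ hθ ↦ (betaPDF_mul_one_sub_inv ha hb hθ.2).symm) measurableSet_Ioo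

lemma integral_betaPDF_mul_one_sub_inv (ha : 0 < a) (hb : 1 < b) :
    ∫ θ in Ioo 0 1, betaPDF a b θ * (1 - θ)⁻¹ = (a + b - 1) / (b - 1) := by
  rw [setIntegral_congr_fun measurableSet_Ioo fun _ hθ ↦ betaPDF_mul_one_sub_inv ha hb hθ.2,
    integral_const_mul, integral_betaPDF ha (sub_pos.2 hb), mul_one]

lemma neg_log_betaPDF_le (ha : 0 < a) (hb : 0 < b) (hθ : θ ∈ Ioo 0 1) :
    -log (betaPDF a b θ) ≤
      |log (ProbabilityTheory.beta a b)| + |a - 1| * θ⁻¹ + |b - 1| * (1 - θ)⁻¹ := by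
  have h1θ : 1 - θ ∈ Ioo 0 1 := ⟨sub_pos.2 hθ.2, sub_lt_self 1 hθ.1⟩
  rw [log_betaPDF ha hb hθ, betaLogKernel]
  linarith [neg_mul_log_le_abs_mul_inv (a - 1) hθ, neg_mul_log_le_abs_mul_inv (b - 1) h1θ,
    le_abs_self (log (ProbabilityTheory.beta a b))]

lemma integral_log_betaPDF_div_mul_le {α β L : ℝ} (ha : 1 < a) (hb : 1 < b)
    (hα : 0 < α) (hβ : 0 < β) (hL₀ : 0 ≤ L) (hL : ∀ θ ∈ Ioo 0 1, log (betaPDF a b θ) ≤ L) :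
    ∫ θ in Ioo 0 1, log (betaPDF a b θ / betaPDF α β θ) * betaPDF a b θ ≤
      L + |log (ProbabilityTheory.beta α β)| + |α - 1| * ((a + b - 1) / (a - 1)) +
        |β - 1| * ((a + b - 1) / (b - 1)) := by
  have ha₀ : 0 < a := by linarith
  have hb₀ : 0 < b := by linarith
  set c := L + |log (ProbabilityTheory.beta α β)|
  set g : ℝ → ℝ := fun θ ↦ c * betaPDF a b θ + |α - 1| * (betaPDF a b θ * θ⁻¹) +
    |β - 1| * (betaPDF a b θ * (1 - θ)⁻¹)
  have hρ := integrableOn_betaPDF ha₀ hb₀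
  have hρ₁ := integrableOn_betaPDF_mul_inv ha hb₀
  have hρ₂ := integrableOn_betaPDF_mul_one_sub_inv ha₀ hb
  have hg : IntegrableOn g (Ioo 0 1) :=
    ((hρ.const_mul c).add (hρ₁.const_mul _)).add (hρ₂.const_mul _)
  have hpoint : ∀ θ ∈ Ioo 0 1, log (betaPDF a b θ / betaPDF α β θ) * betaPDF a b θ ≤ g θ := by
    intro θ hθ
    have hρθ := betaPDF_pos ha₀ hb₀ hθ
    rw [log_div hρθ.ne' (betaPDF_pos hα hβ hθ).ne']
    calc (log (betaPDF a b θ) - log (betaPDF α β θ)) * betaPDF a b θ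
        ≤ (c + |α - 1| * θ⁻¹ + |β - 1| * (1 - θ)⁻¹) * betaPDF a b θ := by
          refine mul_le_mul_of_nonneg_right ?_ hρθ.le
          linarith [hL θ hθ, neg_log_betaPDF_le hα hβ hθ]
      _ = g θ := by ring
  by_cases hint : IntegrableOn (fun θ ↦ log (betaPDF a b θ / betaPDF α β θ) * betaPDF a b θ)
    (Ioo 0 1)
  · calc _ ≤ ∫ θ in Ioo 0 1, g θ := setIntegral_mono_on hint hg measurableSet_Ioo hpoint
      _ = _ := by
        simp only [g]
        rw [integral_add (by exact (hρ.const_mul c).add (hρ₁.const_mul _)) (hρ₂.const_mul _),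
          integral_add (hρ.const_mul c) (hρ₁.const_mul _), integral_const_mul, integral_const_mul,
          integral_const_mul, integral_betaPDF ha₀ hb₀, integral_betaPDF_mul_inv ha hb₀,
          integral_betaPDF_mul_one_sub_inv ha₀ hb, mul_one]
  · rw [integral_undef hint]
    have h₁ : 0 ≤ |α - 1| * ((a + b - 1) / (a - 1)) :=
      mul_nonneg (abs_nonneg _) (div_nonneg (by linarith) (by linarith))
    have h₂ : 0 ≤ |β - 1| * ((a + b - 1) / (b - 1)) :=
      mul_nonneg (abs_nonneg _) (div_nonneg (by linarith) (by linarith))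
    linarith [abs_nonneg (log (ProbabilityTheory.beta α β))]

end BetaDensity

section Concentration

variable {n θ₀ θ : ℝ}

lemma betaLogKernel_le (hθ₀ : θ₀ ∈ Ioo 0 1) (hθ : θ ∈ Ioo 0 1)
    (ha : 1 ≤ n * θ₀) (hb : 1 ≤ n * (1 - θ₀)) :
    betaLogKernel (n * θ₀) (n * (1 - θ₀)) θ ≤
      betaLogKernel (n * θ₀) (n * (1 - θ₀)) θ₀ + |1 / (1 - θ₀) - 1 / θ₀| := by
  obtain ⟨hθ₀0, hθ₀1⟩ := hθ₀
  have h1θ₀ : 0 < 1 - θ₀ := sub_pos.2 hθ₀1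
  have w₁ := mul_le_mul_of_nonneg_left (log_sub_log_le_div_sub_one hθ.1 hθ₀0)
    (sub_nonneg.2 ha)
  have w₂ := mul_le_mul_of_nonneg_left (log_sub_log_le_div_sub_one (sub_pos.2 hθ.2) h1θ₀)
    (sub_nonneg.2 hb)
  have hslope : (n * θ₀ - 1) * (θ / θ₀ - 1) + (n * (1 - θ₀) - 1) * ((1 - θ) / (1 - θ₀) - 1)
      = (θ - θ₀) * (1 / (1 - θ₀) - 1 / θ₀) := by
    field_simp
    ring
  have hdist : |θ - θ₀| ≤ 1 := abs_le.2 ⟨by linarith [hθ.1], by linarith [hθ.2]⟩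
  have habs : (θ - θ₀) * (1 / (1 - θ₀) - 1 / θ₀) ≤ |1 / (1 - θ₀) - 1 / θ₀| :=
    calc _ ≤ |(θ - θ₀) * (1 / (1 - θ₀) - 1 / θ₀)| := le_abs_self _
      _ = |θ - θ₀| * |1 / (1 - θ₀) - 1 / θ₀| := abs_mul _ _
      _ ≤ |1 / (1 - θ₀) - 1 / θ₀| := mul_le_of_le_one_left (abs_nonneg _) hdist
  simp only [betaLogKernel]
  linarith

lemma betaLogKernel_ge {t x : ℝ} (hθ₀ : θ₀ ∈ Ioo 0 1) (ha : 1 ≤ n * θ₀)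
    (hb : 1 ≤ n * (1 - θ₀)) (ht : n * t ^ 2 ≤ 1) (ht' : t ≤ (1 - θ₀) / 2)
    (hx : x ∈ Ioo θ₀ (θ₀ + t)) :
    betaLogKernel (n * θ₀) (n * (1 - θ₀)) θ₀ - 4 / (θ₀ * (1 - θ₀)) ≤
      betaLogKernel (n * θ₀) (n * (1 - θ₀)) x := by
  obtain ⟨hθ₀0, hθ₀1⟩ := hθ₀
  obtain ⟨hxl, hxu⟩ := hx
  have h1θ₀ : 0 < 1 - θ₀ := sub_pos.2 hθ₀1
  have hx0 : 0 < x := hθ₀0.trans hxl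
  have h1x : 0 < 1 - x := by linarith
  have hn : 0 < n := pos_of_mul_pos_left (by linarith) hθ₀0.le
  have w₁ := mul_le_mul_of_nonneg_left (one_sub_div_le_log_sub_log hx0 hθ₀0) (sub_nonneg.2 ha)
  have w₂ := mul_le_mul_of_nonneg_left (one_sub_div_le_log_sub_log h1x h1θ₀) (sub_nonneg.2 hb)
  have hsplit : (n * θ₀ - 1) * (1 - θ₀ / x) + (n * (1 - θ₀) - 1) * (1 - (1 - θ₀) / (1 - x))
      = ((x - θ₀) * (2 * x - 1) - n * (x - θ₀) ^ 2) / (x * (1 - x)) := by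
    field_simp
    ring
  have hnum : -2 ≤ (x - θ₀) * (2 * x - 1) - n * (x - θ₀) ^ 2 := by
    have h₁ : n * (x - θ₀) ^ 2 ≤ 1 :=
      calc n * (x - θ₀) ^ 2 ≤ n * t ^ 2 := by
            gcongr
            linarith
        _ ≤ 1 := ht
    nlinarith
  have hden : θ₀ * (1 - θ₀) / 2 ≤ x * (1 - x) := by nlinarith
  have hq : -(4 / (θ₀ * (1 - θ₀))) ≤
      ((x - θ₀) * (2 * x - 1) - n * (x - θ₀) ^ 2) / (x * (1 - x)) := by
    have hc : 0 < 4 / (θ₀ * (1 - θ₀)) := div_pos four_pos (mul_pos hθ₀0 h1θ₀)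
    have h₂ : 2 ≤ 4 / (θ₀ * (1 - θ₀)) * (x * (1 - x)) :=
      calc (2 : ℝ) = 4 / (θ₀ * (1 - θ₀)) * (θ₀ * (1 - θ₀) / 2) := by field_simp; norm_num
        _ ≤ _ := mul_le_mul_of_nonneg_left hden hc.le
    rw [le_div_iff₀ (mul_pos hx0 h1x)]
    linarith
  simp only [betaLogKernel]
  linarith

lemma log_betaPDF_le (hθ₀ : θ₀ ∈ Ioo 0 1) (ha : 1 ≤ n * θ₀)
    (hn : 4 / (1 - θ₀) ^ 2 ≤ n) (hθ : θ ∈ Ioo 0 1) :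
    log (betaPDF (n * θ₀) (n * (1 - θ₀)) θ) ≤
      1 / 2 * log n + (|1 / (1 - θ₀) - 1 / θ₀| + 4 / (θ₀ * (1 - θ₀))) := by
  have h1θ₀ : 0 < 1 - θ₀ := sub_pos.2 hθ₀.2
  have hn₀ : 0 < n := pos_of_mul_pos_left (by linarith) hθ₀.1.le
  have hn' : 4 ≤ n * (1 - θ₀) ^ 2 := (div_le_iff₀ (pow_pos h1θ₀ 2)).1 hn
  have hb : 1 ≤ n * (1 - θ₀) := by nlinarith
  have hsqrt : 2 / (1 - θ₀) ≤ √n :=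
    (le_sqrt (div_pos two_pos h1θ₀).le hn₀.le).2 (by rw [div_pow]; norm_num; exact hn)
  set t := (√n)⁻¹
  have ht₀ : 0 < t := inv_pos.2 (sqrt_pos.2 hn₀)
  have ht : n * t ^ 2 ≤ 1 := by rw [inv_pow, sq_sqrt hn₀.le, mul_inv_cancel₀ hn₀.ne']
  have ht' : t ≤ (1 - θ₀) / 2 := by
    simpa only [t, inv_div] using inv_anti₀ (div_pos two_pos h1θ₀) hsqrt
  have hρ₀ : 0 < n * θ₀ := by linarith
  have hρ₁ : 0 < n * (1 - θ₀) := by linarith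
  have hwindow : ∀ x ∈ Ioo θ₀ (θ₀ + t),
      exp (log (betaPDF (n * θ₀) (n * (1 - θ₀)) θ) - (|1 / (1 - θ₀) - 1 / θ₀| +
        4 / (θ₀ * (1 - θ₀)))) ≤ betaPDF (n * θ₀) (n * (1 - θ₀)) x := by
    intro x hx
    have hx01 : x ∈ Ioo 0 1 := ⟨hθ₀.1.trans hx.1, by linarith [hx.2]⟩
    rw [← exp_log (betaPDF_pos hρ₀ hρ₁ hx01), exp_le_exp, log_betaPDF hρ₀ hρ₁ hx01,
      log_betaPDF hρ₀ hρ₁ hθ]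
    linarith [betaLogKernel_le hθ₀ hθ ha hb, betaLogKernel_ge hθ₀ ha hb ht ht' hx]
  have hmass := mul_volume_le_one_of_le_betaPDF hρ₀ hρ₁
    (fun x hx ↦ ⟨hθ₀.1.trans hx.1, by linarith [hx.2]⟩) measurableSet_Ioo hwindow
  rw [Real.volume_real_Ioo_of_le (by linarith), add_sub_cancel_left, ← div_eq_mul_inv,
    div_le_one (sqrt_pos.2 hn₀), ← le_log_iff_exp_le (sqrt_pos.2 hn₀), log_sqrt hn₀.le] at hmass
  linarith

end Concentration

/-- For `θ₀ ∈ (0,1)`, `ρₙ = Beta(nθ₀, n(1−θ₀))` and `π = Beta(α,β)` with fixed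
`α, β > 0`, there is `C > 0` with `KL(ρₙ, π) < C + (1/2) log n` for all large `n`. -/
theorem stmt14 (θ₀ α β : ℝ) (hθ₀ : θ₀ ∈ Set.Ioo (0 : ℝ) 1)
    (hα : 0 < α) (hβ : 0 < β) :
    ∃ C > (0 : ℝ), ∃ N : ℕ, ∀ n : ℕ, N ≤ n →
      ∫ θ in Set.Ioo (0 : ℝ) 1,
          Real.log (betaPDF (n * θ₀) (n * (1 - θ₀)) θ / betaPDF α β θ) *
            betaPDF (n * θ₀) (n * (1 - θ₀)) θ
        < C + (1 / 2) * Real.log n := by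
  have hθ₀0 : 0 < θ₀ := hθ₀.1
  have h1θ₀ : 0 < 1 - θ₀ := sub_pos.2 hθ₀.2
  set K := |1 / (1 - θ₀) - 1 / θ₀| + 4 / (θ₀ * (1 - θ₀))
  have hK : 0 ≤ K := add_nonneg (abs_nonneg _) (div_pos four_pos (mul_pos hθ₀0 h1θ₀)).le
  refine ⟨K + |log (ProbabilityTheory.beta α β)| + |α - 1| * (2 / θ₀) +
    |β - 1| * (2 / (1 - θ₀)) + 1, by positivity, ⌈4 / (1 - θ₀) ^ 2 + 2 / θ₀⌉₊, fun n hn ↦ ?_⟩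
  have hn' : 4 / (1 - θ₀) ^ 2 + 2 / θ₀ ≤ n := Nat.ceil_le.1 hn
  have hn₄ : 4 / (1 - θ₀) ^ 2 ≤ n := by linarith [div_pos two_pos hθ₀0]
  have ha : 2 ≤ n * θ₀ :=
    (div_le_iff₀ hθ₀0).1 (by linarith [div_pos four_pos (pow_pos h1θ₀ 2)])
  have hb : 2 ≤ n * (1 - θ₀) := by
    nlinarith [(div_le_iff₀ (pow_pos h1θ₀ 2)).1 hn₄]
  have hlog : 0 ≤ log n := log_nonneg (by nlinarith)
  have hKL := integral_log_betaPDF_div_mul_le (by linarith) (by linarith) hα hβ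
    (by positivity) fun θ hθ ↦ log_betaPDF_le hθ₀ (by linarith) hn₄ hθ
  rw [show n * θ₀ + n * (1 - θ₀) - 1 = n - 1 by ring] at hKL
  have hα' := mul_le_mul_of_nonneg_left (sub_one_div_mul_sub_one_le hθ₀0 ha) (abs_nonneg (α - 1))
  have hβ' := mul_le_mul_of_nonneg_left (sub_one_div_mul_sub_one_le h1θ₀ hb) (abs_nonneg (β - 1))
  linarith
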